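/- arXiv:math/0009088 — 2 statements merged into one kernel-verified Lean document; each statement's English description precedes it below -/
import Mathlib

section
/- Let H be a normal subgroup of a group G, and let x, y ∈ G be elements of the same order such that for every integer k, x^k ∈ H if and only if y^k ∈ H. Let G* = HNN(G, ⟨x⟩, ⟨y⟩, t) be the HNN extension of G with stable letter t satisfying t⁻¹xt = y. Then the normal closure of H in G* intersected with G equals H. -/
/-!
The hypothesis on powers says exactly that the images `x̄, ȳ` of `x, y` in `Q = G ⧸ H` have the
same order, so the HNN extension of `Q` identifying `⟨x̄⟩` with `⟨ȳ⟩` exists, and `G → Q` extends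
to `HNN(G) → HNN(Q)` with `t ↦ t`. This map kills the normal closure of `H`, and on `G` it is
`G → Q → HNN(Q)`, whose kernel is `H` because `Q` embeds in its HNN extension.
-/

open Subgroup

theorem Subgroup.comap_normalClosure_image_eq_of_ker_comp {G E K : Type*} [Group G] [Group E]
    [Group K] (f : G →* E) (Φ : E →* K) {N : Subgroup G} (hN : (Φ.comp f).ker = N) :
    (normalClosure (f '' N)).comap f = N := by
  refine le_antisymm ?_ fun n hn => subset_normalClosure (Set.mem_image_of_mem f hn)
  have hle : normalClosure (f '' N) ≤ Φ.ker :=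
    normalClosure_le_normal (Set.image_subset_iff.2 hN.ge)
  exact (comap_mono hle).trans_eq (by rw [MonoidHom.comap_ker, hN])

section ZPowers

variable {Q : Type*} [Group Q] {a b : Q}

theorem ker_zpowersHom_eq_of_orderOf_eq (h : orderOf a = orderOf b) :
    (zpowersHom Q a).ker = (zpowersHom Q b).ker := by
  ext k
  simp only [MonoidHom.mem_ker, zpowersHom_apply, ← orderOf_dvd_iff_zpow_eq_one, h]

/-- Unlike `zpowersEquivZPowers`, this needs no finiteness and is multiplicative. -/
noncomputable def zpowersMulEquivOfOrderOfEq (h : orderOf a = orderOf b) :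
    zpowers a ≃* zpowers b :=
  (MulEquiv.subgroupCongr (range_zpowersHom a)).symm.trans <|
    (QuotientGroup.quotientKerEquivRange (zpowersHom Q a)).symm.trans <|
      (QuotientGroup.quotientMulEquivOfEq (ker_zpowersHom_eq_of_orderOf_eq h)).trans <|
        (QuotientGroup.quotientKerEquivRange (zpowersHom Q b)).trans
          (MulEquiv.subgroupCongr (range_zpowersHom b))

theorem zpowersMulEquivOfOrderOfEq_zpow (h : orderOf a = orderOf b) (k : ℤ) :
    (zpowersMulEquivOfOrderOfEq h ⟨a ^ k, zpow_mem_zpowers a k⟩ : Q) = b ^ k := by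
  have hk : (QuotientGroup.quotientKerEquivRange (zpowersHom Q a)).symm
      ((MulEquiv.subgroupCongr (range_zpowersHom a)).symm ⟨a ^ k, zpow_mem_zpowers a k⟩) =
        QuotientGroup.mk (Multiplicative.ofAdd k) := by
    rw [MulEquiv.symm_apply_eq]
    rfl
  simp only [zpowersMulEquivOfOrderOfEq, MulEquiv.trans_apply, hk,
    QuotientGroup.quotientMulEquivOfEq_mk]
  rfl

end ZPowers

namespace HNNExtension

variable {G Q : Type*} [Group G] [Group Q] {A B : Subgroup G} {φ : A ≃* B}
  {A' B' : Subgroup Q} {ψ : A' ≃* B'}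

def map (π : G →* Q) (hA : ∀ a : A, π a ∈ A') (hψ : ∀ a : A, (ψ ⟨π a, hA a⟩ : Q) = π (φ a)) :
    HNNExtension G A B φ →* HNNExtension Q A' B' ψ :=
  lift (of.comp π) t fun a => by
    simpa only [MonoidHom.comp_apply, hψ] using t_mul_of (φ := ψ) ⟨π a, hA a⟩

variable (π : G →* Q) (hA : ∀ a : A, π a ∈ A') (hψ : ∀ a : A, (ψ ⟨π a, hA a⟩ : Q) = π (φ a))

theorem map_of (g : G) : map π hA hψ (of g) = of (π g) :=
  lift_of _ _ _ g

theorem ker_map_comp_of : ((map π hA hψ).comp of).ker = π.ker := by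
  ext g
  simp only [MonoidHom.mem_ker, MonoidHom.comp_apply, map_of]
  exact (of_injective (φ := ψ)).eq_iff' (map_one _)

end HNNExtension

theorem hnn_normal_closure_inter_base_general
    {G : Type*} [Group G] (H : Subgroup G) [H.Normal] (x y : G)
    (hk : ∀ k : ℤ, x ^ k ∈ H ↔ y ^ k ∈ H)
    (φ : (Subgroup.zpowers x) ≃* (Subgroup.zpowers y))
    (hφ : (φ ⟨x, Subgroup.mem_zpowers x⟩ : G) = y) :
    Subgroup.comap (HNNExtension.of : G →* HNNExtension G (Subgroup.zpowers x) (Subgroup.zpowers y) φ)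
      (Subgroup.normalClosure (HNNExtension.of '' (H : Set G))) = H := by
  set π := QuotientGroup.mk' H
  have hord : orderOf (π x) = orderOf (π y) := orderOf_eq_orderOf_iff.2 fun n => by
    simpa only [π, QuotientGroup.mk'_apply, ← QuotientGroup.mk_pow, QuotientGroup.eq_one_iff,
      zpow_natCast] using hk n
  have hA (a : zpowers x) : π a ∈ zpowers (π x) := by
    rw [← MonoidHom.map_zpowers]
    exact mem_map_of_mem π a.2
  have hψ (a : zpowers x) :
      (zpowersMulEquivOfOrderOfEq hord ⟨π a, hA a⟩ : G ⧸ H) = π (φ a) := by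
    obtain ⟨a, k, rfl⟩ := a
    have hφk : φ ⟨x ^ k, zpow_mem_zpowers x k⟩ = φ ⟨x, mem_zpowers x⟩ ^ k := by
      rw [← map_zpow]
      rfl
    simp only [map_zpow π, hφk, coe_zpow, hφ, zpowersMulEquivOfOrderOfEq_zpow]
  refine comap_normalClosure_image_eq_of_ker_comp _ (HNNExtension.map π hA hψ) ?_
  rw [HNNExtension.ker_map_comp_of, QuotientGroup.ker_mk']

/-- Lemma 3.3: Let `H` be a normal subgroup of `G`, `x y : G` of the same order with
`x^k ∈ H ↔ y^k ∈ H` for all integers `k`. In the HNN extension of `G` identifying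
`⟨x⟩` with `⟨y⟩` via `x ↦ y` (with stable letter `t`), the normal closure of `H`
intersected with `G` equals `H`. -/
theorem hnn_normal_closure_inter_base
    {G : Type*} [Group G] (H : Subgroup G) [H.Normal] (x y : G)
    (horder : orderOf x = orderOf y)
    (hk : ∀ k : ℤ, x ^ k ∈ H ↔ y ^ k ∈ H)
    (φ : (Subgroup.zpowers x) ≃* (Subgroup.zpowers y))
    (hφ : (φ ⟨x, Subgroup.mem_zpowers x⟩ : G) = y) :
    Subgroup.comap (HNNExtension.of : G →* HNNExtension G (Subgroup.zpowers x) (Subgroup.zpowers y) φ)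
      (Subgroup.normalClosure (HNNExtension.of '' (H : Set G))) = H :=
  hnn_normal_closure_inter_base_general H x y hk φ hφ
end

section
/- Let A, B₁, B₂ be groups with embeddings φᵢ : A → Bᵢ, each equipped with descending chains of normal subgroups (P_nA), (P_nBᵢ) such that φᵢ(P_nA) = P_nBᵢ ∩ φᵢ(A). Let C = B₁ *_A B₂ be the amalgamated free product, and let P_nC be the normal closure in C of the subgroup generated by P_nB₁ and P_nB₂. Then P_nC ∩ Bᵢ = P_nBᵢ for all n and i = 1,2. -/
/-!
Send `C = B₁ *_A B₂` to the amalgam of the quotients `Bᵢ ⧸ PₙBᵢ` over `A ⧸ PₙA`. The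
compatibility condition says exactly that `A ⧸ PₙA → Bᵢ ⧸ PₙBᵢ` is injective, so each
`Bᵢ ⧸ PₙBᵢ` embeds in the quotient amalgam. The normal closure `PₙC` lies in the kernel of
this map, hence an element of `Bᵢ` in `PₙC` dies in `Bᵢ ⧸ PₙBᵢ`, i.e. lies in `PₙBᵢ`.
-/

open Monoid

theorem Subgroup.comap_eq_of_map_eq_inf_range {G H : Type*} [Group G] [Group H] {f : G →* H}
    (hf : Function.Injective f) {N : Subgroup G} {M : Subgroup H}
    (h : N.map f = M ⊓ f.range) : M.comap f = N := by
  rw [← Subgroup.comap_map_eq_self_of_injective hf N, h, Subgroup.comap_inf,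
    inf_eq_left.2 fun x _ => ⟨x, rfl⟩]

theorem QuotientGroup.map_injective_of_comap_eq {G H : Type*} [Group G] [Group H]
    {N : Subgroup G} [N.Normal] {M : Subgroup H} [M.Normal] {f : G →* H}
    (h : M.comap f = N) : Function.Injective (QuotientGroup.map N M f h.ge) := by
  rw [← MonoidHom.ker_eq_bot_iff, QuotientGroup.ker_map, h,
    Subgroup.map_eq_bot_iff, QuotientGroup.ker_mk']

namespace Monoid.PushoutI

variable {ι A : Type*} [Group A] {B : ι → Type*} [∀ i, Group (B i)] {φ : ∀ i, A →* B i}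
  (N : Subgroup A) [N.Normal] (M : ∀ i, Subgroup (B i)) [∀ i, (M i).Normal]

abbrev quotientDiagram (hNM : ∀ i, N ≤ (M i).comap (φ i)) : ∀ i, A ⧸ N →* B i ⧸ M i :=
  fun i => QuotientGroup.map N (M i) (φ i) (hNM i)

def quotientMap (hNM : ∀ i, N ≤ (M i).comap (φ i)) :
    PushoutI φ →* PushoutI (quotientDiagram N M hNM) :=
  lift (fun i => (of i).comp (QuotientGroup.mk' (M i))) ((base _).comp (QuotientGroup.mk' N))
    fun i => by ext a; exact of_apply_eq_base _ i (a : A ⧸ N)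

@[simp]
theorem quotientMap_of (hNM : ∀ i, N ≤ (M i).comap (φ i)) (i : ι) (b : B i) :
    quotientMap N M hNM (of i b) = of i (b : B i ⧸ M i) :=
  lift_of _ _ _ b

theorem normalClosure_le_ker_quotientMap (hNM : ∀ i, N ≤ (M i).comap (φ i)) :
    Subgroup.normalClosure (⋃ j, of (φ := φ) j '' (M j : Set (B j))) ≤
      (quotientMap N M hNM).ker := by
  refine Subgroup.normalClosure_le_normal ?_
  simp only [Set.iUnion_subset_iff, Set.image_subset_iff]
  intro j b hb
  simp [(QuotientGroup.eq_one_iff b).2 hb]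

theorem comap_of_normalClosure_eq (h : ∀ i, (M i).comap (φ i) = N) (i : ι) :
    (Subgroup.normalClosure (⋃ j, of (φ := φ) j '' (M j : Set (B j)))).comap (of i) = M i := by
  refine le_antisymm (fun b hb => ?_)
    fun b hb => Subgroup.subset_normalClosure (Set.mem_iUnion.2 ⟨i, b, hb, rfl⟩)
  have hb' := normalClosure_le_ker_quotientMap N M (fun j => (h j).ge) hb
  rw [MonoidHom.mem_ker, quotientMap_of, ← map_one (of i)] at hb'
  exact (QuotientGroup.eq_one_iff b).1
    (of_injective (fun j => QuotientGroup.map_injective_of_comap_eq (h j)) i hb')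

end Monoid.PushoutI

theorem amalgam_chain_intersection_general
    {A : Type*} [Group A] {B : Fin 2 → Type*} [∀ i, Group (B i)]
    (φ : ∀ i, A →* B i) (hφ : ∀ i, Function.Injective (φ i))
    (PA : ℕ → Subgroup A) (PB : ∀ i, ℕ → Subgroup (B i))
    (hPAnormal : ∀ n, (PA n).Normal) (hPBnormal : ∀ i n, (PB i n).Normal)
    (hcompat : ∀ i n, (PA n).map (φ i) = PB i n ⊓ (φ i).range) :
    ∀ (n : ℕ) (i : Fin 2),
      Subgroup.comap (PushoutI.of (φ := φ) i)
          (Subgroup.normalClosure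
            (⋃ j : Fin 2, (PushoutI.of (φ := φ) j) '' (PB j n : Set (B j)))) =
        PB i n := by
  intro n i
  have := hPAnormal n
  have := fun j => hPBnormal j n
  exact PushoutI.comap_of_normalClosure_eq (PA n) (fun j => PB j n)
    (fun j => Subgroup.comap_eq_of_map_eq_inf_range (hφ j) (hcompat j n)) i

/-- Amalgamation property (IV): for compatible descending chains of normal subgroups on
`A, B₁, B₂`, the normal closure `PₙC` of `⟨PₙB₁, PₙB₂⟩` in the amalgamated free product
`C = B₁ *_A B₂` satisfies `PₙC ∩ Bᵢ = PₙBᵢ`. -/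
theorem amalgam_chain_intersection
    {A : Type*} [Group A] {B : Fin 2 → Type*} [∀ i, Group (B i)]
    (φ : ∀ i, A →* B i) (hφ : ∀ i, Function.Injective (φ i))
    (PA : ℕ → Subgroup A) (PB : ∀ i, ℕ → Subgroup (B i))
    (hPAnormal : ∀ n, (PA n).Normal) (hPBnormal : ∀ i n, (PB i n).Normal)
    (hPAdesc : ∀ n, PA (n + 1) ≤ PA n) (hPBdesc : ∀ i n, PB i (n + 1) ≤ PB i n)
    (hPA0 : PA 0 = ⊤) (hPB0 : ∀ i, PB i 0 = ⊤)
    (hcompat : ∀ i n, (PA n).map (φ i) = PB i n ⊓ (φ i).range) :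
    ∀ (n : ℕ) (i : Fin 2),
      Subgroup.comap (PushoutI.of (φ := φ) i)
          (Subgroup.normalClosure
            (⋃ j : Fin 2, (PushoutI.of (φ := φ) j) '' (PB j n : Set (B j)))) =
        PB i n :=
  amalgam_chain_intersection_general φ hφ PA PB hPAnormal hPBnormal hcompat
end
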